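/- In two variables, a vector polynomial v ∈ (P_s)^2 satisfies div v = 0 if and only if v = rot q := (∂q/∂y, −∂q/∂x) for some q ∈ P_{s+1}. -/

import Mathlib

/-!
Polynomial Poincaré lemma. Let `A` be an antiderivative of `a` in `X j`. Then `r = b + ∂ᵢA`
satisfies `∂ⱼr = ∂ⱼb + ∂ᵢa = 0`, so `q = A - ∫ r dXᵢ` still has `∂ⱼq = a`, while `-∂ᵢq = b`.
Formal antidifferentiation raises the total degree by at most one, which gives `q ∈ P_{s+1}`.
-/

open MvPolynomial Finsupp

namespace MvPolynomial

variable {σ R : Type*}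

section CommSemiring

variable [CommSemiring R]

theorem pderiv_pderiv_comm (i j : σ) (p : MvPolynomial σ R) :
    pderiv i (pderiv j p) = pderiv j (pderiv i p) := by
  ext m
  simp only [coeff_pderiv, add_right_comm m (single i 1), Finsupp.add_apply]
  rcases eq_or_ne i j with rfl | hij
  · rfl
  · simp only [single_eq_of_ne hij, single_eq_of_ne hij.symm, add_zero]
    ring

theorem totalDegree_pderiv_le (i : σ) (p : MvPolynomial σ R) :
    (pderiv i p).totalDegree ≤ p.totalDegree - 1 := by
  refine Finset.sup_le fun m hm => ?_
  have hm' : m + single i 1 ∈ p.support := by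
    rw [mem_support_iff, coeff_pderiv] at hm
    exact mem_support_iff.mpr (left_ne_zero_of_mul hm)
  have hdeg := le_totalDegree hm'
  change degree (m + single i 1) ≤ _ at hdeg
  change degree m ≤ _
  rw [map_add, degree_single] at hdeg
  omega

variable [Algebra ℚ R]

noncomputable def pantideriv (i : σ) : MvPolynomial σ R →ₗ[R] MvPolynomial σ R :=
  (basisMonomials σ R).constr R fun m =>
    monomial (m + single i 1) (algebraMap ℚ R (m i + 1)⁻¹)

theorem pantideriv_monomial (i : σ) (m : σ →₀ ℕ) (a : R) :
    pantideriv i (monomial m a) = monomial (m + single i 1) (algebraMap ℚ R (m i + 1)⁻¹ * a) := by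
  have hm : monomial m a = a • basisMonomials σ R m := by
    rw [coe_basisMonomials, smul_monomial, smul_eq_mul, mul_one]
  rw [hm, map_smul, pantideriv, Module.Basis.constr_basis, smul_monomial, smul_eq_mul, mul_comm]

theorem pderiv_pantideriv_self (i : σ) (p : MvPolynomial σ R) :
    pderiv i (pantideriv i p) = p := by
  induction p using MvPolynomial.induction_on' with
  | monomial m a =>
    have h : algebraMap ℚ R ((m i : ℚ) + 1)⁻¹ * ((m i + 1 : ℕ) : R) = 1 := by
      rw [← map_natCast (algebraMap ℚ R), ← map_mul, Nat.cast_add_one,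
        inv_mul_cancel₀ (Nat.cast_add_one_ne_zero _), map_one]
    rw [pantideriv_monomial, pderiv_monomial, add_tsub_cancel_right, Finsupp.add_apply,
      single_eq_same, mul_right_comm, h, one_mul]
  | add p q hp hq => rw [map_add, map_add, hp, hq]

theorem pderiv_pantideriv_of_ne {i j : σ} (hij : i ≠ j) (p : MvPolynomial σ R) :
    pderiv j (pantideriv i p) = pantideriv i (pderiv j p) := by
  induction p using MvPolynomial.induction_on' with
  | monomial m a =>
    rw [pantideriv_monomial, pderiv_monomial, pderiv_monomial, pantideriv_monomial,
      Finsupp.add_apply, single_eq_of_ne hij.symm, add_zero, tsub_apply, single_eq_of_ne hij,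
      tsub_zero]
    rcases Nat.eq_zero_or_pos (m j) with hm | hm
    · simp [hm]
    · rw [tsub_add_eq_add_tsub (single_le_iff.mpr hm), mul_assoc]
  | add p q hp hq => rw [map_add, map_add, map_add, map_add, hp, hq]

theorem totalDegree_pantideriv_le (i : σ) (p : MvPolynomial σ R) :
    (pantideriv i p).totalDegree ≤ p.totalDegree + 1 := by
  conv_lhs => rw [p.as_sum, map_sum]
  refine (totalDegree_finsetSum _ _).trans (Finset.sup_le fun m hm => ?_)
  rw [pantideriv_monomial]
  refine (totalDegree_monomial_le _ _).trans ?_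
  change degree (m + single i 1) ≤ _
  rw [map_add, degree_single]
  exact Nat.add_le_add_right (le_totalDegree hm) 1

end CommSemiring

theorem exists_pderiv_eq_of_pderiv_add_pderiv_eq_zero [CommRing R] [Algebra ℚ R] {i j : σ}
    (hij : i ≠ j) {a b : MvPolynomial σ R} (h : pderiv i a + pderiv j b = 0) :
    ∃ q : MvPolynomial σ R, q.totalDegree ≤ max a.totalDegree b.totalDegree + 1 ∧
      a = pderiv j q ∧ b = -pderiv i q := by
  set A := pantideriv j a
  set r := b + pderiv i A
  have hr : pderiv j r = 0 := by
    rw [map_add, pderiv_pderiv_comm, pderiv_pantideriv_self, add_comm, h]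
  have hA : A.totalDegree ≤ a.totalDegree + 1 := totalDegree_pantideriv_le j a
  have hr_deg : r.totalDegree ≤ max a.totalDegree b.totalDegree := by
    refine (totalDegree_add _ _).trans (max_le (le_max_right _ _) ?_)
    exact (totalDegree_pderiv_le i A).trans (by omega)
  refine ⟨A - pantideriv i r, ?_, ?_, ?_⟩
  · refine (totalDegree_sub _ _).trans (max_le (by omega) ?_)
    exact (totalDegree_pantideriv_le i r).trans (by omega)
  · rw [map_sub, pderiv_pantideriv_of_ne hij, hr, map_zero, sub_zero, pderiv_pantideriv_self]
  · rw [map_sub, pderiv_pantideriv_self, neg_sub, add_sub_cancel_right]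

end MvPolynomial

/-- In two variables, a vector polynomial `v ∈ (P_s)²` satisfies `div v = 0`
if and only if `v = rot q := (∂q/∂y, −∂q/∂x)` for some `q ∈ P_{s+1}`. -/
theorem div_eq_zero_iff_rot (s : ℕ) (v : Fin 2 → MvPolynomial (Fin 2) ℝ)
    (hv : ∀ i, (v i).totalDegree ≤ s) :
    pderiv 0 (v 0) + pderiv 1 (v 1) = 0 ↔
      ∃ q : MvPolynomial (Fin 2) ℝ, q.totalDegree ≤ s + 1 ∧
        v 0 = pderiv 1 q ∧ v 1 = -pderiv 0 q := by
  constructor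
  · intro h
    obtain ⟨q, hq, h0, h1⟩ := exists_pderiv_eq_of_pderiv_add_pderiv_eq_zero Fin.zero_ne_one h
    exact ⟨q, hq.trans (Nat.add_le_add_right (max_le (hv 0) (hv 1)) 1), h0, h1⟩
  · rintro ⟨q, -, h0, h1⟩
    rw [h0, h1, map_neg, pderiv_pderiv_comm, add_neg_cancel]
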